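/- Let p : [0,1] → ℝ be continuous and strictly positive, let λ, ν ∈ ℝ with ν ≥ 0, let α, β ∈ ℝ, and let u, v : [0,1] → ℝ be twice continuously differentiable, strictly positive on (0,1), both satisfying BC(α,β), with −u''(x) = λ·p(x)·u(x) and −v''(x) = ν·v(x) for all x ∈ [0,1]. Then ν · min_{x ∈ [0,1]} (1/p(x)) ≤ λ ≤ ν · max_{x ∈ [0,1]} (1/p(x)). -/

import Mathlib

/-!
Writing `W = u v' - u' v` for the Wronskian, the two equations give `W' = (λ p - ν) u v`.
Both functions satisfy the same separated boundary conditions, so `(u, u')` and `(v, v')`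
are parallel at each endpoint and `W` vanishes there; hence `∫₀¹ (λ p - ν) u v = 0`.
As `u v > 0` on `(0,1)`, the factor `λ p - ν` takes both signs there:
`λ p x ≤ ν ≤ λ p y` for some `x, y`, and dividing by `p` (using `ν ≥ 0`) gives the bounds.
-/

open Real

/-- Separated boundary conditions BC(α,β) on [0,1]. -/
def BC (α β : ℝ) (w : ℝ → ℝ) : Prop :=
  w 0 * Real.cos α + deriv w 0 * Real.sin α = 0 ∧
  w 1 * Real.cos β + deriv w 1 * Real.sin β = 0

open Set MeasureTheory intervalIntegral

noncomputable def wronskian (f g : ℝ → ℝ) (x : ℝ) : ℝ :=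
  f x * deriv g x - deriv f x * g x

theorem mul_sub_mul_eq_zero_of_cos_sin {θ a b c d : ℝ}
    (h₁ : a * cos θ + b * sin θ = 0) (h₂ : c * cos θ + d * sin θ = 0) :
    a * d - b * c = 0 := by
  linear_combination (cos θ * d - sin θ * c) * h₁ - (cos θ * b - sin θ * a) * h₂ -
    (a * d - b * c) * sin_sq_add_cos_sq θ

theorem BC.wronskian_eq_zero {α β : ℝ} {f g : ℝ → ℝ} (hf : BC α β f) (hg : BC α β g) :
    wronskian f g 0 = 0 ∧ wronskian f g 1 = 0 :=
  ⟨mul_sub_mul_eq_zero_of_cos_sin hf.1 hg.1, mul_sub_mul_eq_zero_of_cos_sin hf.2 hg.2⟩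

theorem hasDerivAt_wronskian {f g : ℝ → ℝ} {x : ℝ}
    (hf : DifferentiableAt ℝ f x) (hg : DifferentiableAt ℝ g x)
    (hf' : DifferentiableAt ℝ (deriv f) x) (hg' : DifferentiableAt ℝ (deriv g) x) :
    HasDerivAt (wronskian f g) (f x * deriv (deriv g) x - deriv (deriv f) x * g x) x :=
  ((hf.hasDerivAt.mul hg'.hasDerivAt).sub (hf'.hasDerivAt.mul hg.hasDerivAt)).congr_deriv
    (by ring)

theorem continuous_mul_deriv_deriv_sub_mul {f g : ℝ → ℝ}
    (hf : ContDiff ℝ 2 f) (hg : ContDiff ℝ 2 g) :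
    Continuous fun x => f x * deriv (deriv g) x - deriv (deriv f) x * g x :=
  (hf.continuous.mul (hg.deriv' (n := 1)).continuous_deriv_one).sub
    ((hf.deriv' (n := 1)).continuous_deriv_one.mul hg.continuous)

theorem integral_mul_deriv_deriv_sub_eq_wronskian {f g : ℝ → ℝ}
    (hf : ContDiff ℝ 2 f) (hg : ContDiff ℝ 2 g) (a b : ℝ) :
    ∫ x in a..b, (f x * deriv (deriv g) x - deriv (deriv f) x * g x) =
      wronskian f g b - wronskian f g a := by
  refine integral_eq_sub_of_hasDerivAt (fun x _ => hasDerivAt_wronskian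
    (hf.differentiable two_ne_zero x) (hg.differentiable two_ne_zero x)
    (hf.differentiable_deriv_two x) (hg.differentiable_deriv_two x)) ?_
  exact (continuous_mul_deriv_deriv_sub_mul hf hg).intervalIntegrable a b

theorem exists_mem_Ioo_nonpos_of_integral_eq_zero {f : ℝ → ℝ} {a b : ℝ} (hab : a < b)
    (hf : IntervalIntegrable f volume a b) (h : ∫ x in a..b, f x = 0) :
    ∃ x ∈ Ioo a b, f x ≤ 0 := by
  by_contra! hpos
  exact (intervalIntegral_pos_of_pos_on hf hpos hab).ne' h

theorem exists_mem_Ioo_nonneg_of_integral_eq_zero {f : ℝ → ℝ} {a b : ℝ} (hab : a < b)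
    (hf : IntervalIntegrable f volume a b) (h : ∫ x in a..b, f x = 0) :
    ∃ x ∈ Ioo a b, 0 ≤ f x := by
  obtain ⟨x, hx, hfx⟩ := exists_mem_Ioo_nonpos_of_integral_eq_zero hab hf.neg
    (by simp [intervalIntegral.integral_neg, h])
  exact ⟨x, hx, neg_nonpos.mp hfx⟩

theorem stmt_9_general (p : ℝ → ℝ)
    (hppos : ∀ x ∈ Set.Icc (0:ℝ) 1, 0 < p x)
    (l ν : ℝ) (hν : 0 ≤ ν) (α β : ℝ) (u v : ℝ → ℝ)
    (hu : ContDiff ℝ 2 u) (hv : ContDiff ℝ 2 v)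
    (hupos : ∀ x ∈ Set.Ioo (0:ℝ) 1, 0 < u x)
    (hvpos : ∀ x ∈ Set.Ioo (0:ℝ) 1, 0 < v x)
    (hubc : BC α β u) (hvbc : BC α β v)
    (huode : ∀ x ∈ Set.Icc (0:ℝ) 1, -(deriv (deriv u) x) = l * p x * u x)
    (hvode : ∀ x ∈ Set.Icc (0:ℝ) 1, -(deriv (deriv v) x) = ν * v x)
    (m M : ℝ) (hm : IsLeast ((fun x => 1 / p x) '' Set.Icc (0:ℝ) 1) m)
    (hM : IsGreatest ((fun x => 1 / p x) '' Set.Icc (0:ℝ) 1) M) :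
    ν * m ≤ l ∧ l ≤ ν * M := by
  set F := fun x => u x * deriv (deriv v) x - deriv (deriv u) x * v x
  have hF : ∀ x ∈ Ioo (0:ℝ) 1, F x = (l * p x - ν) * (u x * v x) := fun x hx => by
    have hxI := Ioo_subset_Icc_self hx
    linear_combination v x * huode x hxI - u x * hvode x hxI
  have hFint : IntervalIntegrable F volume 0 1 :=
    (continuous_mul_deriv_deriv_sub_mul hu hv).intervalIntegrable 0 1
  have hint : ∫ x in (0:ℝ)..1, F x = 0 := by
    rw [integral_mul_deriv_deriv_sub_eq_wronskian hu hv, (hubc.wronskian_eq_zero hvbc).1,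
      (hubc.wronskian_eq_zero hvbc).2, sub_zero]
  obtain ⟨y, hy, hFy⟩ := exists_mem_Ioo_nonneg_of_integral_eq_zero zero_lt_one hFint hint
  obtain ⟨x, hx, hFx⟩ := exists_mem_Ioo_nonpos_of_integral_eq_zero zero_lt_one hFint hint
  have hy' : ν ≤ l * p y :=
    sub_nonneg.mp (nonneg_of_mul_nonneg_left (hF y hy ▸ hFy) (mul_pos (hupos y hy) (hvpos y hy)))
  have hx' : l * p x ≤ ν :=
    sub_nonpos.mp (nonpos_of_mul_nonpos_left (hF x hx ▸ hFx) (mul_pos (hupos x hx) (hvpos x hx)))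
  have hpy := hppos y (Ioo_subset_Icc_self hy)
  have hpx := hppos x (Ioo_subset_Icc_self hx)
  constructor
  · calc ν * m ≤ ν * (1 / p y) :=
          mul_le_mul_of_nonneg_left (hm.2 ⟨y, Ioo_subset_Icc_self hy, rfl⟩) hν
      _ = ν / p y := mul_one_div ν (p y)
      _ ≤ l := (div_le_iff₀ hpy).mpr hy'
  · calc l ≤ ν / p x := (le_div_iff₀ hpx).mpr hx'
      _ = ν * (1 / p x) := (mul_one_div ν (p x)).symm
      _ ≤ ν * M := mul_le_mul_of_nonneg_left (hM.2 ⟨x, Ioo_subset_Icc_self hx, rfl⟩) hν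

/-- Theorem 3.2: λ₀(1,α,β)·min p⁻¹ ≤ λ₀(p,α,β) ≤ λ₀(1,α,β)·max p⁻¹. -/
theorem stmt_9 (p : ℝ → ℝ) (hp : Continuous p)
    (hppos : ∀ x ∈ Set.Icc (0:ℝ) 1, 0 < p x)
    (l ν : ℝ) (hν : 0 ≤ ν) (α β : ℝ) (u v : ℝ → ℝ)
    (hu : ContDiff ℝ 2 u) (hv : ContDiff ℝ 2 v)
    (hupos : ∀ x ∈ Set.Ioo (0:ℝ) 1, 0 < u x)
    (hvpos : ∀ x ∈ Set.Ioo (0:ℝ) 1, 0 < v x)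
    (hubc : BC α β u) (hvbc : BC α β v)
    (huode : ∀ x ∈ Set.Icc (0:ℝ) 1, -(deriv (deriv u) x) = l * p x * u x)
    (hvode : ∀ x ∈ Set.Icc (0:ℝ) 1, -(deriv (deriv v) x) = ν * v x)
    (m M : ℝ) (hm : IsLeast ((fun x => 1 / p x) '' Set.Icc (0:ℝ) 1) m)
    (hM : IsGreatest ((fun x => 1 / p x) '' Set.Icc (0:ℝ) 1) M) :
    ν * m ≤ l ∧ l ≤ ν * M :=
  stmt_9_general p hppos l ν hν α β u v hu hv hupos hvpos hubc hvbc huode hvode m M hm hM
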